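/- In the S-case setup, the sum s_{({a,b,c},{d,e})} + s_{({a,b},{c,d,e})} is even. -/

import Mathlib

/-!
Deleting `v` and `w` leaves `c` with exactly two neighbours `x, y` in `S`. The two counts together
enumerate the admissible pairs of `S` for `({a,b},{d,e})`, split by the side of the 2-forest that
contains `c`. On these pairs, exchanging the edges `cx` and `cy` between the tree and the forest is
a fixed-point-free involution. Since `c` is not a terminal, it reaches other vertices both in the
tree and in the forest, so each of them holds exactly one of the two edges, as a pendant edge at
`c`; moving a pendant edge to the other neighbour keeps the graph acyclic and changes no
connection between the other vertices.
-/

namespace C2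

open SimpleGraph

variable {V : Type*}

/-- `ψ` is the edge set of a spanning tree of `H`. -/
def IsSpanningTree (H : SimpleGraph V) (ψ : Set (Sym2 V)) : Prop :=
  ψ ⊆ H.edgeSet ∧ (fromEdgeSet ψ).Connected ∧ (fromEdgeSet ψ).IsAcyclic

/-- `φ` is a spanning 2-forest of `H` compatible with `(P₁, P₂)`. -/
def IsSpanning2Forest (H : SimpleGraph V) (P₁ P₂ : Set V) (φ : Set (Sym2 V)) : Prop :=
  φ ⊆ H.edgeSet ∧ (fromEdgeSet φ).IsAcyclic ∧
    ∃ C₁ C₂ : (fromEdgeSet φ).ConnectedComponent, C₁ ≠ C₂ ∧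
      (∀ C : (fromEdgeSet φ).ConnectedComponent, C = C₁ ∨ C = C₂) ∧
      (∀ u ∈ P₁, (fromEdgeSet φ).connectedComponentMk u = C₁) ∧
      (∀ u ∈ P₂, (fromEdgeSet φ).connectedComponentMk u = C₂)

/-- `(ψ, φ)` is an admissible pair of `H` for `(P₁, P₂)`. -/
def AdmissiblePair (H : SimpleGraph V) (P₁ P₂ : Set V) (ψ φ : Set (Sym2 V)) : Prop :=
  Disjoint ψ φ ∧ ψ ∪ φ = H.edgeSet ∧ IsSpanningTree H ψ ∧ IsSpanning2Forest H P₁ P₂ φ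

/-- The number of admissible pairs of `H` for `(P₁, P₂)`. -/
noncomputable def admissibleCount (H : SimpleGraph V) (P₁ P₂ : Set V) : ℕ :=
  Set.ncard {pr : Set (Sym2 V) × Set (Sym2 V) | AdmissiblePair H P₁ P₂ pr.1 pr.2}

/-- The Kirchhoff polynomial `Ψ_G = Σ_T Π_{e ∉ T} x_e`. -/
noncomputable def kirchhoff (G : SimpleGraph V) : MvPolynomial G.edgeSet ℤ :=
  ∑ᶠ T ∈ {T : Set (Sym2 V) | IsSpanningTree G T},
    ∏ᶠ e ∈ {e : G.edgeSet | (e : Sym2 V) ∉ T}, MvPolynomial.X e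

/-- `[Ψ_G]₂`, the number of points `x ∈ 𝔽₂^{E(G)}` with `Ψ_G(x) = 0`. -/
noncomputable def pointCount2 (G : SimpleGraph V) : ℕ :=
  Set.ncard {x : G.edgeSet → ZMod 2 |
    MvPolynomial.eval₂ (Int.castRingHom (ZMod 2)) x (kirchhoff G) = 0}

theorem mem_compl_pair {x v w : V} (h1 : x ≠ v) (h2 : x ≠ w) :
    x ∈ ({v, w}ᶜ : Set V) := by
  simp [h1, h2]


lemma even_ncard_of_involution {α : Type*} {s : Set α} (hs : s.Finite) (σ : α → α)
    (hσs : ∀ a ∈ s, σ a ∈ s) (hσσ : ∀ a ∈ s, σ (σ a) = a) (hσ : ∀ a ∈ s, σ a ≠ a) :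
    Even s.ncard := by
  rw [Set.ncard_eq_toFinset_card _ hs, even_iff_two_dvd, ← ZMod.natCast_eq_zero_iff,
    Finset.card_eq_sum_ones, Nat.cast_sum, Nat.cast_one]
  refine Finset.sum_involution (fun a _ => σ a) (fun _ _ => by decide) (fun a ha _ => ?_)
    (fun a ha => ?_) fun a ha => ?_ <;> rw [Set.Finite.mem_toFinset] at *
  exacts [hσ a ha, hσs a ha, hσσ a ha]

lemma insert_diff_pair_of_mem_of_notMem {α : Type*} {s : Set α} {a b : α} (ha : a ∈ s)
    (hb : b ∉ s) : insert a (s \ {a, b}) = s := by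
  ext c
  by_cases hca : c = a <;> by_cases hcb : c = b <;> simp_all

lemma symmDiff_pair_of_mem_of_notMem {α : Type*} {s : Set α} {a b : α} (ha : a ∈ s)
    (hb : b ∉ s) : symmDiff s {a, b} = insert b (s \ {a, b}) := by
  ext c
  by_cases hca : c = a <;> by_cases hcb : c = b <;> simp_all [Set.mem_symmDiff]

lemma ncard_neighborSet_induce (G : SimpleGraph V) (s : Set V) (u : s) :
    ((G.induce s).neighborSet u).ncard = (s ∩ G.neighborSet u).ncard := by
  rw [neighborSet_induce, ← Set.ncard_image_of_injective _ Subtype.val_injective,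
    Subtype.image_preimage_coe]

section PendantEdge

variable {κ χ : Set (Sym2 V)} {z : V}

lemma exists_mem_of_reachable {u : V} (h : (fromEdgeSet χ).Reachable z u) (hu : u ≠ z) :
    ∃ f ∈ χ, z ∈ f := by
  obtain ⟨p⟩ := h
  cases p with
  | nil => exact absurd rfl hu
  | cons hadj _ => exact ⟨_, ((fromEdgeSet_adj _).1 hadj).1, Sym2.mem_mk_left _ _⟩

lemma isAcyclic_insert_iff_of_forall_notMem (hz : ∀ f ∈ κ, z ∉ f) {t : V} (ht : t ≠ z) :
    (fromEdgeSet (insert s(z, t) κ)).IsAcyclic ↔ (fromEdgeSet κ).IsAcyclic := by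
  rw [Set.insert_eq, fromEdgeSet_union, sup_comm]
  refine isAcyclic_add_edge_iff_of_not_reachable z t fun h => ?_
  obtain ⟨f, hf, hzf⟩ := exists_mem_of_reachable h ht
  exact hz f hf hzf

lemma reachable_insert_iff_of_forall_notMem [DecidableEq V] (hz : ∀ f ∈ κ, z ∉ f)
    {t u v : V} :
    (fromEdgeSet (insert s(z, t) κ)).Reachable u v ↔
      (fromEdgeSet κ).Reachable (Function.update id z t u) (Function.update id z t v) := by
  set r := Function.update id z t
  have hr : ∀ u, (fromEdgeSet (insert s(z, t) κ)).Reachable u (r u) := by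
    intro u
    by_cases hu : u = z
    · subst hu
      by_cases ht : t = u
      · simp [r, ht]
      · simpa [r] using ((fromEdgeSet_adj _).2 ⟨Set.mem_insert _ _, Ne.symm ht⟩).reachable
    · simp [r, hu]
  have hstep : ∀ a b, (fromEdgeSet (insert s(z, t) κ)).Adj a b →
      (fromEdgeSet κ).Reachable (r a) (r b) := by
    intro a b hab
    obtain ⟨hab | hab, hne⟩ := (fromEdgeSet_adj _).1 hab
    · rcases Sym2.eq_iff.1 hab with ⟨rfl, rfl⟩ | ⟨rfl, rfl⟩ <;> simp [r, Function.update_apply]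
    · have ha : a ≠ z := fun h => hz _ hab (h ▸ Sym2.mem_mk_left _ _)
      have hb : b ≠ z := fun h => hz _ hab (h ▸ Sym2.mem_mk_right _ _)
      simpa [r, ha, hb] using ((fromEdgeSet_adj _).2 ⟨hab, hne⟩).reachable
  constructor
  · rintro ⟨p⟩
    induction p with
    | nil => rfl
    | cons hadj _ ih => exact (hstep _ _ hadj).trans ih
  · intro h
    exact (hr u).trans ((h.mono (fromEdgeSet_mono (Set.subset_insert _ _))).trans (hr v).symm)

lemma reachable_insert_iff_reachable_insert [DecidableEq V] (hz : ∀ f ∈ κ, z ∉ f) {s t : V}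
    (ht : t ≠ z) {u v : V} :
    (fromEdgeSet (insert s(z, t) κ)).Reachable u v ↔
      (fromEdgeSet (insert s(z, s) κ)).Reachable
        (Function.update id z t u) (Function.update id z t v) := by
  have hr : ∀ u, Function.update id z s (Function.update id z t u) = Function.update id z t u := by
    intro u
    by_cases hu : u = z <;> simp [hu, ht]
  rw [reachable_insert_iff_of_forall_notMem hz, reachable_insert_iff_of_forall_notMem hz, hr, hr]

end PendantEdge

section Admissible

variable {H : SimpleGraph V} {P₁ P₂ : Set V} {ψ φ φ' : Set (Sym2 V)} {z p₁ p₂ : V}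

lemma IsSpanning2Forest.reachable_or (h : IsSpanning2Forest H P₁ P₂ φ) (hp₁ : p₁ ∈ P₁)
    (hp₂ : p₂ ∈ P₂) (u : V) :
    (fromEdgeSet φ).Reachable u p₁ ∨ (fromEdgeSet φ).Reachable u p₂ := by
  obtain ⟨-, -, C₁, C₂, -, htot, h₁, h₂⟩ := h
  refine (htot (connectedComponentMk _ u)).imp (fun hu => ?_) (fun hu => ?_)
  · exact ConnectedComponent.eq.1 (hu.trans (h₁ p₁ hp₁).symm)
  · exact ConnectedComponent.eq.1 (hu.trans (h₂ p₂ hp₂).symm)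

lemma IsSpanning2Forest.of_reachable_iff (h : IsSpanning2Forest H P₁ P₂ φ) (hp₁ : p₁ ∈ P₁)
    (hp₂ : p₂ ∈ P₂) (hsub : φ' ⊆ H.edgeSet) (hac : (fromEdgeSet φ').IsAcyclic) (g : V → V)
    (hg : ∀ u ∈ P₁ ∪ P₂, g u = u)
    (hreach : ∀ u v, (fromEdgeSet φ').Reachable u v ↔ (fromEdgeSet φ).Reachable (g u) (g v)) :
    IsSpanning2Forest H P₁ P₂ φ' := by
  have hor := h.reachable_or hp₁ hp₂
  obtain ⟨-, -, C₁, C₂, hne, -, h₁, h₂⟩ := h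
  have hreach₁ : ∀ u ∈ P₁, (fromEdgeSet φ').Reachable u p₁ := fun u hu => by
    rw [hreach, hg u (.inl hu), hg p₁ (.inl hp₁)]
    exact ConnectedComponent.eq.1 ((h₁ u hu).trans (h₁ p₁ hp₁).symm)
  have hreach₂ : ∀ u ∈ P₂, (fromEdgeSet φ').Reachable u p₂ := fun u hu => by
    rw [hreach, hg u (.inr hu), hg p₂ (.inr hp₂)]
    exact ConnectedComponent.eq.1 ((h₂ u hu).trans (h₂ p₂ hp₂).symm)
  refine ⟨hsub, hac, connectedComponentMk _ p₁, connectedComponentMk _ p₂, fun heq => ?_,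
    fun C => ?_, fun u hu => ConnectedComponent.sound (hreach₁ u hu),
    fun u hu => ConnectedComponent.sound (hreach₂ u hu)⟩
  · rw [ConnectedComponent.eq, hreach, hg p₁ (.inl hp₁), hg p₂ (.inr hp₂)] at heq
    exact hne ((h₁ p₁ hp₁).symm.trans ((ConnectedComponent.sound heq).trans (h₂ p₂ hp₂)))
  · induction C using ConnectedComponent.ind with
    | h u =>
      rw [ConnectedComponent.eq, ConnectedComponent.eq, hreach, hreach, hg p₁ (.inl hp₁),
        hg p₂ (.inr hp₂)]
      exact hor (g u)

lemma IsSpanningTree.of_reachable_iff {ψ' : Set (Sym2 V)} (h : IsSpanningTree H ψ)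
    (hsub : ψ' ⊆ H.edgeSet) (hac : (fromEdgeSet ψ').IsAcyclic) (g : V → V)
    (hreach : ∀ u v, (fromEdgeSet ψ').Reachable u v ↔ (fromEdgeSet ψ).Reachable (g u) (g v)) :
    IsSpanningTree H ψ' :=
  have := h.2.1.nonempty
  ⟨hsub, ⟨fun u v => (hreach u v).2 (h.2.1.preconnected _ _)⟩, hac⟩

lemma AdmissiblePair.swap_insert {κψ κφ : Set (Sym2 V)} {x y : V}
    (hκψ : ∀ f ∈ κψ, z ∉ f) (hκφ : ∀ f ∈ κφ, z ∉ f)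
    (hp₁ : p₁ ∈ P₁) (hp₂ : p₂ ∈ P₂) (hz₁ : z ∉ P₁) (hz₂ : z ∉ P₂)
    (h : AdmissiblePair H P₁ P₂ (insert s(z, x) κψ) (insert s(z, y) κφ)) :
    AdmissiblePair H P₁ P₂ (insert s(z, y) κψ) (insert s(z, x) κφ) := by
  classical
  obtain ⟨hd, hunion, hψ, hφ⟩ := h
  have hxE : s(z, x) ∈ H.edgeSet := hψ.1 (Set.mem_insert _ _)
  have hyE : s(z, y) ∈ H.edgeSet := hφ.1 (Set.mem_insert _ _)
  have hxz : x ≠ z := (H.ne_of_adj hxE).symm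
  have hyz : y ≠ z := (H.ne_of_adj hyE).symm
  have hxy : s(z, x) ≠ s(z, y) := fun he =>
    Set.disjoint_left.1 hd (Set.mem_insert _ _) (he ▸ Set.mem_insert _ _)
  refine ⟨Set.disjoint_left.2 fun f hfψ hfφ => ?_, ?_, ?_, ?_⟩
  · rcases hfψ with rfl | hfψ <;> rcases hfφ with hfφ | hfφ
    · exact hxy hfφ.symm
    · exact hκφ _ hfφ (Sym2.mem_mk_left _ _)
    · exact hκψ _ hfψ (hfφ ▸ Sym2.mem_mk_left _ _)
    · exact Set.disjoint_left.1 hd (Set.mem_insert_of_mem _ hfψ) (Set.mem_insert_of_mem _ hfφ)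
  · rw [← hunion, Set.insert_union, Set.union_insert, Set.insert_union, Set.union_insert,
      Set.insert_comm]
  · refine hψ.of_reachable_iff (Set.insert_subset hyE ((Set.subset_insert _ _).trans hψ.1))
      ((isAcyclic_insert_iff_of_forall_notMem hκψ hyz).2
        ((isAcyclic_insert_iff_of_forall_notMem hκψ hxz).1 hψ.2.2))
      _ fun u v => reachable_insert_iff_reachable_insert hκψ hyz
  · refine hφ.of_reachable_iff hp₁ hp₂ (Set.insert_subset hxE ((Set.subset_insert _ _).trans hφ.1))
      ((isAcyclic_insert_iff_of_forall_notMem hκφ hxz).2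
        ((isAcyclic_insert_iff_of_forall_notMem hκφ hyz).1 hφ.2.1))
      _ (fun u hu => Function.update_of_ne ?_ _ _)
      fun u v => reachable_insert_iff_reachable_insert hκφ hxz
    rintro rfl
    exact hu.elim hz₁ hz₂

lemma AdmissiblePair.symmDiff_pair {x y : V} (hN : H.neighborSet z ⊆ {x, y})
    (hp₁ : p₁ ∈ P₁) (hp₂ : p₂ ∈ P₂) (hz₁ : z ∉ P₁) (hz₂ : z ∉ P₂)
    (h : AdmissiblePair H P₁ P₂ ψ φ) :
    AdmissiblePair H P₁ P₂ (symmDiff ψ {s(z, x), s(z, y)}) (symmDiff φ {s(z, x), s(z, y)}) := by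
  set F : Set (Sym2 V) := {s(z, x), s(z, y)}
  have ⟨hd, _, hψ, hφ⟩ := h
  have hedge : ∀ f ∈ H.edgeSet, z ∈ f → f ∈ F := by
    intro f hf hzf
    obtain ⟨w, rfl⟩ := Sym2.mem_iff_exists.1 hzf
    rcases hN hf with rfl | rfl <;> simp [F]
  obtain ⟨f, hfψ, hzf⟩ :=
    exists_mem_of_reachable (hψ.2.1.preconnected z p₁) (ne_of_mem_of_not_mem hp₁ hz₁)
  obtain ⟨g, hgφ, hzg⟩ : ∃ g ∈ φ, z ∈ g := (hφ.reachable_or hp₁ hp₂ z).elim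
    (exists_mem_of_reachable · (ne_of_mem_of_not_mem hp₁ hz₁))
    (exists_mem_of_reachable · (ne_of_mem_of_not_mem hp₂ hz₂))
  obtain ⟨x', y', hF, hx, hy⟩ : ∃ x' y', ({s(z, x'), s(z, y')} : Set (Sym2 V)) = F ∧
      s(z, x') ∈ ψ ∧ s(z, y') ∈ φ := by
    have hgψ : g ∉ ψ := fun hgψ => Set.disjoint_left.1 hd hgψ hgφ
    by_cases hx : s(z, x) ∈ ψ
    · rcases hedge g (hφ.1 hgφ) hzg with rfl | rfl
      exacts [absurd hx hgψ, ⟨x, y, rfl, hx, hgφ⟩]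
    · rcases hedge f (hψ.1 hfψ) hzf with rfl | rfl
      · exact absurd hfψ hx
      rcases hedge g (hφ.1 hgφ) hzg with rfl | rfl
      exacts [⟨y, x, Set.pair_comm _ _, hfψ, hgφ⟩, absurd hfψ hgψ]
  have hx' : s(z, x') ∉ φ := Set.disjoint_left.1 hd hx
  have hy' : s(z, y') ∉ ψ := fun hy' => Set.disjoint_left.1 hd hy' hy
  have hiso : ∀ χ ⊆ H.edgeSet, ∀ f ∈ χ \ {s(z, x'), s(z, y')}, z ∉ f := fun χ hχ f hf hzf =>
    hf.2 (hF ▸ hedge f (hχ hf.1) hzf)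
  rw [← hF, symmDiff_pair_of_mem_of_notMem hx hy', Set.pair_comm,
    symmDiff_pair_of_mem_of_notMem hy hx', Set.pair_comm]
  refine .swap_insert (hiso ψ hψ.1) (hiso φ hφ.1) hp₁ hp₂ hz₁ hz₂ ?_
  rwa [insert_diff_pair_of_mem_of_notMem hx hy', Set.pair_comm,
    insert_diff_pair_of_mem_of_notMem hy hx']

lemma isSpanning2Forest_insert_or_insert_iff :
    IsSpanning2Forest H (insert z P₁) P₂ φ ∨ IsSpanning2Forest H P₁ (insert z P₂) φ ↔
      IsSpanning2Forest H P₁ P₂ φ := by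
  constructor
  · rintro (⟨hs, ha, C₁, C₂, hne, htot, h₁, h₂⟩ | ⟨hs, ha, C₁, C₂, hne, htot, h₁, h₂⟩)
    · exact ⟨hs, ha, C₁, C₂, hne, htot, fun u hu => h₁ u (.inr hu), h₂⟩
    · exact ⟨hs, ha, C₁, C₂, hne, htot, h₁, fun u hu => h₂ u (.inr hu)⟩
  · rintro ⟨hs, ha, C₁, C₂, hne, htot, h₁, h₂⟩
    rcases htot (connectedComponentMk _ z) with hz | hz
    · exact .inl ⟨hs, ha, C₁, C₂, hne, htot, by rintro u (rfl | hu); exacts [hz, h₁ u hu], h₂⟩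
    · exact .inr ⟨hs, ha, C₁, C₂, hne, htot, h₁, by rintro u (rfl | hu); exacts [hz, h₂ u hu]⟩

lemma not_isSpanning2Forest_insert_and_insert (hp₂ : p₂ ∈ P₂) :
    ¬ (IsSpanning2Forest H (insert z P₁) P₂ φ ∧ IsSpanning2Forest H P₁ (insert z P₂) φ) := by
  rintro ⟨⟨-, -, C₁, C₂, hne, -, h₁, h₂⟩, ⟨-, -, -, C₂', -, -, -, h₂'⟩⟩
  exact hne ((h₁ z (.inl rfl)).symm.trans <|
    (h₂' z (.inl rfl)).trans <| (h₂' p₂ (.inr hp₂)).symm.trans (h₂ p₂ hp₂))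

variable [Finite V]

theorem admissibleCount_insert_add_admissibleCount_insert (hP₂ : P₂.Nonempty) :
    admissibleCount H (insert z P₁) P₂ + admissibleCount H P₁ (insert z P₂) =
      admissibleCount H P₁ P₂ := by
  obtain ⟨p₂, hp₂⟩ := hP₂
  rw [admissibleCount, admissibleCount, admissibleCount,
    ← Set.ncard_union_eq ?_ (Set.toFinite _) (Set.toFinite _), ← Set.ofPred_or]
  · simp only [AdmissiblePair, ← and_or_left, isSpanning2Forest_insert_or_insert_iff]
  · exact Set.disjoint_left.2 fun _ h₁ h₂ =>
      not_isSpanning2Forest_insert_and_insert hp₂ ⟨h₁.2.2.2, h₂.2.2.2⟩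

theorem even_admissibleCount_of_ncard_neighborSet_eq_two (hz : (H.neighborSet z).ncard = 2)
    (hp₁ : p₁ ∈ P₁) (hp₂ : p₂ ∈ P₂) (hz₁ : z ∉ P₁) (hz₂ : z ∉ P₂) :
    Even (admissibleCount H P₁ P₂) := by
  obtain ⟨x, y, -, hN⟩ := Set.ncard_eq_two.1 hz
  set F : Set (Sym2 V) := {s(z, x), s(z, y)}
  refine even_ncard_of_involution (Set.toFinite _) (fun pr => (symmDiff pr.1 F, symmDiff pr.2 F))
    (fun _ h => h.symmDiff_pair hN.le hp₁ hp₂ hz₁ hz₂) (fun _ _ => by simp) fun pr _ h => ?_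
  exact (Set.insert_nonempty _ _).ne_empty (symmDiff_eq_left.1 (congrArg Prod.fst h))

end Admissible

theorem scase_swap_c_parity_general {V : Type*} [Fintype V]
    (G : SimpleGraph V)
    (hreg : ∀ x : V, (G.neighborSet x).ncard = 4)
    (v w a b c d e : V) (hvw : G.Adj v w)
    (hac : a ≠ c)
    (hbc : b ≠ c)
    (hcd : c ≠ d) (hce : c ≠ e)
    (hav : a ≠ v) (haw : a ≠ w) (hbv : b ≠ v) (hbw : b ≠ w)
    (hcv : c ≠ v) (hcw : c ≠ w) (hdv : d ≠ v) (hdw : d ≠ w)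
    (hev : e ≠ v) (hew : e ≠ w)
    (hNw : G.neighborSet w = {a, b, c, v}) (hNv : G.neighborSet v = {c, d, e, w}) :
    let S := G.induce ({v, w}ᶜ : Set V)
    let A : ↥({v, w}ᶜ : Set V) := ⟨a, mem_compl_pair hav haw⟩
    let B : ↥({v, w}ᶜ : Set V) := ⟨b, mem_compl_pair hbv hbw⟩
    let C : ↥({v, w}ᶜ : Set V) := ⟨c, mem_compl_pair hcv hcw⟩
    let D : ↥({v, w}ᶜ : Set V) := ⟨d, mem_compl_pair hdv hdw⟩
    let E : ↥({v, w}ᶜ : Set V) := ⟨e, mem_compl_pair hev hew⟩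
    Even (admissibleCount S {A, B, C} {D, E} + admissibleCount S {A, B} {C, D, E}) := by
  intro S A B C D E
  have hvwc : {v, w} ⊆ G.neighborSet c := by
    rintro u (rfl | rfl)
    · exact G.adj_symm (show c ∈ G.neighborSet u by simp [hNv])
    · exact G.adj_symm (show c ∈ G.neighborSet u by simp [hNw])
  have hC : (S.neighborSet C).ncard = 2 := by
    rw [ncard_neighborSet_induce, Set.inter_comm, ← Set.sdiff_eq, Set.ncard_sdiff hvwc, hreg,
      Set.ncard_pair hvw.ne]
  rw [show ({A, B, C} : Set _) = insert C {A, B} by rw [Set.pair_comm B C, Set.insert_comm A C],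
    admissibleCount_insert_add_admissibleCount_insert (Set.insert_nonempty D {E})]
  refine even_admissibleCount_of_ncard_neighborSet_eq_two hC (Set.mem_insert A _)
    (Set.mem_insert D _) ?_ ?_ <;> simp [A, B, C, D, E, hac.symm, hbc.symm, hcd, hce]

/-- S-case, swapping around `c`: in the S-case setup,
`s_{({a,b,c},{d,e})} + s_{({a,b},{c,d,e})}` is even. -/
theorem scase_swap_c_parity {V : Type*} [Fintype V]
    (G : SimpleGraph V) (hconn : G.Connected)
    (hreg : ∀ x : V, (G.neighborSet x).ncard = 4)
    (v w a b c d e : V) (hvw : G.Adj v w)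
    (hab : a ≠ b) (hac : a ≠ c) (had : a ≠ d) (hae : a ≠ e)
    (hbc : b ≠ c) (hbd : b ≠ d) (hbe : b ≠ e)
    (hcd : c ≠ d) (hce : c ≠ e) (hde : d ≠ e)
    (hav : a ≠ v) (haw : a ≠ w) (hbv : b ≠ v) (hbw : b ≠ w)
    (hcv : c ≠ v) (hcw : c ≠ w) (hdv : d ≠ v) (hdw : d ≠ w)
    (hev : e ≠ v) (hew : e ≠ w)
    (hNw : G.neighborSet w = {a, b, c, v}) (hNv : G.neighborSet v = {c, d, e, w}) :
    let S := G.induce ({v, w}ᶜ : Set V)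
    let A : ↥({v, w}ᶜ : Set V) := ⟨a, mem_compl_pair hav haw⟩
    let B : ↥({v, w}ᶜ : Set V) := ⟨b, mem_compl_pair hbv hbw⟩
    let C : ↥({v, w}ᶜ : Set V) := ⟨c, mem_compl_pair hcv hcw⟩
    let D : ↥({v, w}ᶜ : Set V) := ⟨d, mem_compl_pair hdv hdw⟩
    let E : ↥({v, w}ᶜ : Set V) := ⟨e, mem_compl_pair hev hew⟩
    Even (admissibleCount S {A, B, C} {D, E} + admissibleCount S {A, B} {C, D, E}) :=
  scase_swap_c_parity_general G hreg v w a b c d e hvw hac hbc hcd hce hav haw hbv hbw hcv hcw hdv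
    hdw hev hew hNw hNv

end C2
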